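/- arXiv:2101.05597 — 6 statements merged into one kernel-verified Lean document; each statement's English description precedes it below -/
import Mathlib

section
/- Let C_i and C_j be sibling clauses over a finite set W of variables. Then for every clause D with D ⊆ C_i and D ⊄ C_j (i.e., D is not a subset of C_j), there exist a clause E with E ⊆ C_j and a finite set W' ⊆ W such that D and E are sibling clauses over W'. -/
def ClauseTrue {V : Type*} (σ : V → Bool) (C : Finset (V × Bool)) : Prop :=
  ∃ l ∈ C, σ l.1 = l.2

def ClauseFalse {V : Type*} (σ : V → Bool) (C : Finset (V × Bool)) : Prop :=
  ∀ l ∈ C, σ l.1 ≠ l.2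

def NonTaut {V : Type*} (C : Finset (V × Bool)) : Prop :=
  ∀ x : V, ¬((x, true) ∈ C ∧ (x, false) ∈ C)

def FullyPopulatedOver {V : Type*} (C : Finset (V × Bool)) (W : Finset V) : Prop :=
  (∀ x ∈ W, Xor' ((x, true) ∈ C) ((x, false) ∈ C)) ∧ ∀ l ∈ C, l.1 ∈ W

def FullyPopulated {V : Type*} [Fintype V] (C : Finset (V × Bool)) : Prop :=
  ∀ x : V, Xor' ((x, true) ∈ C) ((x, false) ∈ C)

theorem stmt_6 {V : Type*} (Ci Cj : Finset (V × Bool)) (W : Finset V)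
    (hCi : FullyPopulatedOver Ci W) (hCj : FullyPopulatedOver Cj W) (hne : Ci ≠ Cj) :
    ∀ D : Finset (V × Bool), D ⊆ Ci → ¬ D ⊆ Cj →
      ∃ (E : Finset (V × Bool)) (W' : Finset V), E ⊆ Cj ∧ W' ⊆ W ∧
        FullyPopulatedOver D W' ∧ FullyPopulatedOver E W' ∧ D ≠ E := by
  classical
  intro D hDCi hDnCj
  set W' : Finset V := D.image Prod.fst with hW'
  set E : Finset (V × Bool) := Cj.filter (fun l => l.1 ∈ W') with hE
  have hW'W : W' ⊆ W := by
    intro x hx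
    obtain ⟨l, hl, rfl⟩ := Finset.mem_image.mp hx
    exact hCi.2 l (hDCi hl)
  refine ⟨E, W', Finset.filter_subset _ _, hW'W, ?_, ?_, ?_⟩
  · constructor
    · intro x hx
      obtain ⟨l, hl, hlx⟩ := Finset.mem_image.mp hx
      have hxor := hCi.1 x (hW'W hx)
      obtain ⟨y, b⟩ := l
      simp at hlx; subst hlx
      cases b with
      | true =>
        exact Or.inl ⟨hl, fun h => by rcases hxor with ⟨_,h2⟩|⟨_,h2⟩ <;> [exact h2 (hDCi h); exact h2 (hDCi hl)]⟩
      | false =>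
        exact Or.inr ⟨hl, fun h => by rcases hxor with ⟨_,h2⟩|⟨_,h2⟩ <;> [exact h2 (hDCi hl); exact h2 (hDCi h)]⟩
    · intro l hl
      exact Finset.mem_image.mpr ⟨l, hl, rfl⟩
  · constructor
    · intro x hx
      have hxor := hCj.1 x (hW'W hx)
      rcases hxor with ⟨h1, h2⟩ | ⟨h1, h2⟩
      · exact Or.inl ⟨Finset.mem_filter.mpr ⟨h1, hx⟩, fun h => h2 (Finset.mem_filter.mp h).1⟩
      · exact Or.inr ⟨Finset.mem_filter.mpr ⟨h1, hx⟩, fun h => h2 (Finset.mem_filter.mp h).1⟩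
    · intro l hl
      exact (Finset.mem_filter.mp hl).2
  · intro heq
    apply hDnCj
    intro l hl
    rw [heq] at hl
    exact (Finset.mem_filter.mp hl).1
end

section
/- Let V be a finite type and let C_k be a clause fully populated over V. Then the formula F consisting of all non-tautology clauses over V that are not subsets of C_k is satisfiable; in fact, any assignment σ under which C_k is false makes every clause of F true. -/
theorem stmt_11 {V : Type*} [Fintype V] (Ck : Finset (V × Bool)) (hCk : FullyPopulated Ck) :
    (∀ σ : V → Bool, ClauseFalse σ Ck →
      ∀ D ∈ {D : Finset (V × Bool) | NonTaut D ∧ ¬ D ⊆ Ck}, ClauseTrue σ D) ∧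
    (∃ σ : V → Bool,
      ∀ D ∈ {D : Finset (V × Bool) | NonTaut D ∧ ¬ D ⊆ Ck}, ClauseTrue σ D) := by
  classical
  have main : ∀ σ : V → Bool, ClauseFalse σ Ck →
      ∀ D ∈ {D : Finset (V × Bool) | NonTaut D ∧ ¬ D ⊆ Ck}, ClauseTrue σ D := by
    intro σ hσ D hD
    obtain ⟨hNT, hns⟩ := hD
    rw [Finset.not_subset] at hns
    obtain ⟨l, hlD, hlCk⟩ := hns
    obtain ⟨x, b⟩ := l
    refine ⟨(x, b), hlD, ?_⟩
    have hx := hCk x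
    -- the opposite literal is in Ck
    have hopp : (x, !b) ∈ Ck := by
      cases b <;> simp at hlCk ⊢ <;> rcases hx with ⟨h1, h2⟩ | ⟨h1, h2⟩ <;> tauto
    have := hσ (x, !b) hopp
    simp at this ⊢
    cases b <;> simp_all
  refine ⟨main, ?_⟩
  refine ⟨fun x => if (x, false) ∈ Ck then true else false, main _ ?_⟩
  intro l hl
  obtain ⟨x, b⟩ := l
  have hx := hCk x
  rcases hx with ⟨h1, h2⟩ | ⟨h1, h2⟩ <;> cases b <;> simp_all
end

section
/- Let V be a finite type with exactly n elements and let F be a finite formula over V all of whose clauses are non-tautology clauses. If the number of clauses in F is strictly greater than 3^n − 2^n, then F is unsatisfiable. -/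
open Finset

section Counting

variable {V α : Type*} [Fintype V] [DecidableEq V] [Fintype α] [DecidableEq α]

theorem card_filter_forall_ne_apply (g : V → α) :
    #{f : V → α | ∀ x, f x ≠ g x} = (Fintype.card α - 1) ^ Fintype.card V := by
  have hpi : ({f : V → α | ∀ x, f x ≠ g x} : Finset _) = Fintype.piFinset fun x => {g x}ᶜ := by
    ext f
    simp
  simp [hpi, Fintype.card_piFinset, card_compl]

theorem card_filter_exists_eq_apply (g : V → α) :
    #{f : V → α | ∃ x, f x = g x} =
      Fintype.card α ^ Fintype.card V - (Fintype.card α - 1) ^ Fintype.card V := by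
  have hsplit := card_filter_add_card_filter_not (s := univ) fun f : V → α => ∃ x, f x = g x
  simp only [not_exists, ← ne_eq, card_filter_forall_ne_apply, card_univ, Fintype.card_fun]
    at hsplit
  omega

end Counting

section Encoding

variable {V : Type*} [DecidableEq V]

def Clause.toPartialAssignment (C : Finset (V × Bool)) (x : V) : Option Bool :=
  if (x, true) ∈ C then some true else if (x, false) ∈ C then some false else none

theorem NonTaut.mem_iff_toPartialAssignment_eq_some {C : Finset (V × Bool)} (hC : NonTaut C)
    (x : V) (b : Bool) : (x, b) ∈ C ↔ Clause.toPartialAssignment C x = some b := by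
  have := hC x
  unfold Clause.toPartialAssignment
  cases b <;> split_ifs <;> simp_all

theorem Clause.toPartialAssignment_injOn :
    Set.InjOn Clause.toPartialAssignment {C : Finset (V × Bool) | NonTaut C} := by
  intro C hC C' hC' h
  ext ⟨x, b⟩
  rw [NonTaut.mem_iff_toPartialAssignment_eq_some hC, h,
    ← NonTaut.mem_iff_toPartialAssignment_eq_some hC']

theorem ClauseTrue.exists_toPartialAssignment_eq {σ : V → Bool} {C : Finset (V × Bool)}
    (hσ : ClauseTrue σ C) (hC : NonTaut C) :
    ∃ x, Clause.toPartialAssignment C x = some (σ x) := by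
  obtain ⟨⟨x, b⟩, hl, hσx⟩ := hσ
  exact ⟨x, hσx ▸ (hC.mem_iff_toPartialAssignment_eq_some x b).mp hl⟩

end Encoding

theorem stmt_15 {V : Type*} [Fintype V] (n : ℕ) (hn : Fintype.card V = n)
    (F : Finset (Finset (V × Bool))) (hNT : ∀ C ∈ F, NonTaut C)
    (hcard : F.card > 3 ^ n - 2 ^ n) :
    ¬ ∃ σ : V → Bool, ∀ C ∈ F, ClauseTrue σ C := by
  classical
  rintro ⟨σ, hσ⟩
  have hle : #F ≤ #{f : V → Option Bool | ∃ x, f x = some (σ x)} :=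
    card_le_card_of_injOn Clause.toPartialAssignment
      (fun C hC => mem_filter.mpr ⟨mem_univ _, (hσ C hC).exists_toPartialAssignment_eq (hNT C hC)⟩)
      (Clause.toPartialAssignment_injOn.mono fun C hC => hNT C hC)
  rw [card_filter_exists_eq_apply (fun x => some (σ x)), hn] at hle
  simp only [Fintype.card_option, Fintype.card_bool, Nat.reduceAdd, Nat.add_one_sub_one] at hle
  omega
end

section
/- Let V be a finite type, let C_k be a clause fully populated over V, and let F be the formula consisting of all non-tautology clauses over V that are not subsets of C_k. Then for every non-tautology clause D over V with D ∉ F, the formula F ∪ {D} is unsatisfiable. -/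
theorem stmt_16 {V : Type*} [Fintype V] (Ck : Finset (V × Bool)) (hCk : FullyPopulated Ck)
    (D : Finset (V × Bool)) (hD : NonTaut D)
    (hDF : D ∉ {E : Finset (V × Bool) | NonTaut E ∧ ¬ E ⊆ Ck}) :
    ¬ ∃ σ : V → Bool,
      ∀ C ∈ {E : Finset (V × Bool) | NonTaut E ∧ ¬ E ⊆ Ck} ∪ {D}, ClauseTrue σ C := by
  rintro ⟨σ, h⟩
  -- D ⊆ Ck
  have hDCk : D ⊆ Ck := by
    by_contra hns
    exact hDF ⟨hD, hns⟩
  classical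
  set Cσ : Finset (V × Bool) := Finset.univ.image (fun x => (x, !σ x)) with hCσ
  have hmem : ∀ x b, (x, b) ∈ Cσ ↔ b = !σ x := by
    intro x b
    simp [hCσ, Prod.ext_iff, eq_comm]
  have hNT : NonTaut Cσ := by
    intro x ⟨h1, h2⟩
    rw [hmem] at h1 h2
    cases σ x <;> simp_all
  have hfalse : ∀ l ∈ Cσ, σ l.1 ≠ l.2 := by
    rintro ⟨x, b⟩ hl
    rw [hmem] at hl
    subst hl; simp
  by_cases hsub : Cσ ⊆ Ck
  · -- every literal of Ck with σ x = b would contradict xor; D ⊆ Ck false under σ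
    obtain ⟨⟨x, b⟩, hlD, hσ⟩ := h D (Or.inr rfl)
    have h1 : (x, !σ x) ∈ Ck := hsub ((hmem x _).2 rfl)
    have h2 : (x, b) ∈ Ck := hDCk hlD
    simp only at hσ
    subst hσ
    have hx := hCk x
    revert h1 h2 hx
    cases σ x <;> simp [Xor'] <;> tauto
  · obtain ⟨l, hl, hσ⟩ := h Cσ (Or.inl ⟨hNT, hsub⟩)
    exact hfalse l hl hσ
end

section
/- Let V be a finite type with exactly n elements, let F be a finite formula over V all of whose clauses are non-tautology clauses, and let x : V. If the number of clauses of F containing the literal (x, false) is strictly greater than 3^(n-1) − 2^(n-1), then every assignment σ that makes all clauses of F true satisfies σ x = false. -/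
theorem stmt_17 {V : Type*} [Fintype V] [DecidableEq V] (n : ℕ) (hn : Fintype.card V = n)
    (F : Finset (Finset (V × Bool))) (hNT : ∀ C ∈ F, NonTaut C) (x : V)
    (hcard : (F.filter (fun C => (x, false) ∈ C)).card > 3 ^ (n - 1) - 2 ^ (n - 1)) :
    ∀ σ : V → Bool, (∀ C ∈ F, ClauseTrue σ C) → σ x = false := by
  intro σ hsat
  by_contra hσx
  have hx : σ x = true := by
    cases h : σ x with
    | false => exact absurd h hσx
    | true => rfl
  classical
  -- type of variables other than x
  have hα : Fintype.card {y : V // y ≠ x} = n - 1 := by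
    simp only [ne_eq]
    rw [Fintype.card_subtype_compl, Fintype.card_subtype_eq, hn]
  set code : Bool → Fin 3 := fun b => if b then 1 else 2 with hcode
  set E : Finset (V × Bool) → ({y : V // y ≠ x} → Fin 3) := fun C y =>
    if (y.1, true) ∈ C then 1 else if (y.1, false) ∈ C then 2 else 0 with hE
  set W : Finset ({y : V // y ≠ x} → Fin 3) :=
    Finset.univ.filter (fun g => ∃ y, g y = code (σ y.1)) with hW
  -- cardinality of W
  have hWcard : W.card = 3 ^ (n - 1) - 2 ^ (n - 1) := by
    have htot : (Finset.univ : Finset ({y : V // y ≠ x} → Fin 3)).card = 3 ^ (n - 1) := by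
      simp [Finset.card_univ, Fintype.card_fun, hα]
    have hB : (Finset.univ.filter
        (fun g : {y : V // y ≠ x} → Fin 3 => ¬ ∃ y, g y = code (σ y.1))).card
        = 2 ^ (n - 1) := by
      have h1 : (Finset.univ.filter
          (fun g : {y : V // y ≠ x} → Fin 3 => ¬ ∃ y, g y = code (σ y.1))).card
          = Fintype.card {g : {y : V // y ≠ x} → Fin 3 // ∀ y, g y ≠ code (σ y.1)} := by
        rw [Fintype.card_subtype]
        congr 1
        ext g
        push_neg
        simp
      rw [h1]
      rw [Fintype.card_congr (Equiv.subtypePiEquivPi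
        (p := fun (y : {y : V // y ≠ x}) (v : Fin 3) => v ≠ code (σ y.1)))]
      rw [Fintype.card_pi]
      have hcv : ∀ y : {y : V // y ≠ x},
          Fintype.card {v : Fin 3 // v ≠ code (σ y.1)} = 2 := by
        intro y
        simp only [ne_eq]
        rw [Fintype.card_subtype_compl, Fintype.card_subtype_eq]
        simp
      simp [hcv, hα]
    have key := Finset.card_filter_add_card_filter_not
      (s := (Finset.univ : Finset ({y : V // y ≠ x} → Fin 3)))
      (fun g => ∃ y, g y = code (σ y.1))
    rw [htot] at key
    rw [hB] at key
    rw [show W = Finset.univ.filter (fun g : {y : V // y ≠ x} → Fin 3 => ∃ y, g y = code (σ y.1)) from hW]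
    exact Nat.eq_sub_of_add_eq key
  -- E maps the filtered clauses into W
  have hmaps : ∀ C ∈ F.filter (fun C => (x, false) ∈ C), E C ∈ W := by
    intro C hC
    rw [Finset.mem_filter] at hC
    obtain ⟨hCF, hxC⟩ := hC
    obtain ⟨⟨y, b⟩, hlC, hlσ⟩ := hsat C hCF
    simp only at hlσ
    have hyx : y ≠ x := by
      intro h
      have hb : b = true := by rw [← hlσ, h, hx]
      have hmem : (x, true) ∈ C := by rw [← h, ← hb]; exact hlC
      exact hNT C hCF x ⟨hmem, hxC⟩
    rw [hW, Finset.mem_filter]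
    refine ⟨Finset.mem_univ _, ⟨⟨y, hyx⟩, ?_⟩⟩
    subst hlσ
    cases h : σ y with
    | true =>
      have : (y, true) ∈ C := by rwa [h] at hlC
      simp [hE, hcode, this, h]
    | false =>
      have h2 : (y, false) ∈ C := by rwa [h] at hlC
      have h1 : (y, true) ∉ C := fun hc => hNT C hCF y ⟨hc, h2⟩
      simp [hE, hcode, h1, h2, h]
  -- E is injective on the filtered clauses
  have hinj : Set.InjOn E (F.filter (fun C => (x, false) ∈ C)) := by
    intro C hC C' hC' hEq
    rw [Finset.coe_filter, Set.mem_setOf_eq] at hC hC'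
    obtain ⟨hCF, hxC⟩ := hC
    obtain ⟨hCF', hxC'⟩ := hC'
    have key : ∀ (y : V) (hy : y ≠ x) (b : Bool), (y, b) ∈ C ↔ (y, b) ∈ C' := by
      intro y hy b
      have heq := congrFun hEq ⟨y, hy⟩
      simp only [hE] at heq
      cases b <;>
      · constructor <;> intro hm <;>
        · by_contra hm'
          rcases Decidable.em ((y, true) ∈ C) with h1 | h1 <;>
          rcases Decidable.em ((y, false) ∈ C) with h2 | h2 <;>
          rcases Decidable.em ((y, true) ∈ C') with h3 | h3 <;>
          rcases Decidable.em ((y, false) ∈ C') with h4 | h4 <;>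
          first
          | exact hNT C hCF y ⟨h1, h2⟩
          | exact hNT C' hCF' y ⟨h3, h4⟩
          | (simp [h1, h2, h3, h4] at heq ⊢ <;> tauto)
          | tauto
    ext ⟨y, b⟩
    rcases Decidable.em (y = x) with hxy | hy
    · subst hxy
      cases b
      · simp [hxC, hxC']
      · constructor <;> intro hm
        · exact absurd ⟨hm, hxC⟩ (hNT C hCF y)
        · exact absurd ⟨hm, hxC'⟩ (hNT C' hCF' y)
    · exact key y hy b
  have hle := Finset.card_le_card_of_injOn E hmaps hinj
  omega
end

section
/- Let V be a finite type with exactly n elements, let F be a finite formula over V all of whose clauses are non-tautology clauses, and let x : V. If the number of clauses of F containing (x, true) and the number of clauses of F containing (x, false) are both strictly greater than 3^(n-1) − 2^(n-1), then F is unsatisfiable. -/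
lemma mem_iff_enc {V : Type*} [DecidableEq V] (C : Finset (V × Bool)) (hC : NonTaut C)
    (y : V) (c : Bool) :
    (y, c) ∈ C ↔ (if (y, true) ∈ C then some true else if (y, false) ∈ C then some false
      else (none : Option Bool)) = some c := by
  have := hC y
  cases c <;> split_ifs with h1 h2 <;> simp_all

theorem stmt_18 {V : Type*} [Fintype V] [DecidableEq V] (n : ℕ) (hn : Fintype.card V = n)
    (F : Finset (Finset (V × Bool))) (hNT : ∀ C ∈ F, NonTaut C) (x : V)
    (htrue : (F.filter (fun C => (x, true) ∈ C)).card > 3 ^ (n - 1) - 2 ^ (n - 1))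
    (hfalse : (F.filter (fun C => (x, false) ∈ C)).card > 3 ^ (n - 1) - 2 ^ (n - 1)) :
    ¬ ∃ σ : V → Bool, ∀ C ∈ F, ClauseTrue σ C := by
  rintro ⟨σ, hσ⟩
  set b := !σ x with hb
  have hS : (F.filter (fun C => (x, b) ∈ C)).card > 3 ^ (n - 1) - 2 ^ (n - 1) := by
    cases hσx : σ x <;> simp only [hb, hσx, Bool.not_true, Bool.not_false]
    · exact htrue
    · exact hfalse
  set S := F.filter (fun C => (x, b) ∈ C) with hSdef
  have hcardA : Fintype.card {y : V // y ≠ x} = n - 1 := by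
    have := Fintype.card_subtype_compl (fun y : V => y = x) (α := V)
    simp only [Fintype.card_subtype_eq] at this
    rw [this, hn]
  -- encoding map
  set enc : Finset (V × Bool) → ({y : V // y ≠ x} → Option Bool) :=
    fun C y => if (y.1, true) ∈ C then some true else if (y.1, false) ∈ C then some false
      else none with henc
  classical
  set T : Finset ({y : V // y ≠ x} → Option Bool) :=
    Finset.univ.filter (fun g => ∃ y, g y = some (σ y.1)) with hT
  -- image lands in T
  have hmapsto : ∀ C ∈ S, enc C ∈ T := by
    intro C hC
    rw [hSdef, Finset.mem_filter] at hC
    obtain ⟨hCF, hxb⟩ := hC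
    obtain ⟨l, hl, hlt⟩ := hσ C hCF
    have hlx : l.1 ≠ x := by
      intro hEq
      have hlC : (x, σ x) ∈ C := by
        rw [← hEq, hlt]; simpa using hl
      have hnt := hNT C hCF x
      cases hσx : σ x <;> rw [hσx] at hlC <;> simp only [hb, hσx, Bool.not_true,
        Bool.not_false] at hxb <;> exact hnt (by tauto)
    refine Finset.mem_filter.2 ⟨Finset.mem_univ _, ⟨⟨l.1, hlx⟩, ?_⟩⟩
    have : (l.1, σ l.1) ∈ C := by rwa [hlt, Prod.mk.eta]
    exact (mem_iff_enc C (hNT C hCF) l.1 (σ l.1)).1 this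
  -- injectivity on S
  have hinj : Set.InjOn enc S := by
    intro C hC D hD h
    simp only [hSdef, Finset.coe_filter, Set.mem_setOf_eq] at hC hD
    ext ⟨y, c⟩
    by_cases hy : y = x
    · subst hy
      have hC' := hNT C hC.1 y
      have hD' := hNT D hD.1 y
      have hbC := hC.2
      have hbD := hD.2
      cases c <;> cases hbb : b <;> simp_all
    · have := congrFun h ⟨y, hy⟩
      rw [mem_iff_enc C (hNT C hC.1) y c, mem_iff_enc D (hNT D hD.1) y c]
      simp only [henc] at this
      rw [this]
  have hle : S.card ≤ T.card :=
    Finset.card_le_card_of_injOn enc hmapsto hinj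
  -- counting T
  have hcompl : (Finset.univ.filter (fun g : {y : V // y ≠ x} → Option Bool =>
      ¬ ∃ y, g y = some (σ y.1))).card = 2 ^ (n - 1) := by
    have : (Finset.univ.filter (fun g : {y : V // y ≠ x} → Option Bool =>
        ¬ ∃ y, g y = some (σ y.1))) =
        Fintype.piFinset (fun y : {y : V // y ≠ x} =>
          ({none, some (!σ y.1)} : Finset (Option Bool))) := by
      ext g
      simp only [Finset.mem_filter, Finset.mem_univ, true_and, not_exists,
        Fintype.mem_piFinset, Finset.mem_insert, Finset.mem_singleton]
      refine forall_congr' fun y => ?_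
      rcases hg : g y with _ | c
      · simp
      · cases c <;> cases hsy : σ y.1 <;> simp
    rw [this, Fintype.card_piFinset]
    have : ∀ y : {y : V // y ≠ x},
        ({none, some (!σ y.1)} : Finset (Option Bool)).card = 2 := by
      intro y; rw [Finset.card_insert_of_notMem (by simp), Finset.card_singleton]
    rw [Finset.prod_congr rfl (fun y _ => this y), Finset.prod_const, Finset.card_univ, hcardA]
  have htotal : (Finset.univ : Finset ({y : V // y ≠ x} → Option Bool)).card = 3 ^ (n - 1) := by
    rw [Finset.card_univ, Fintype.card_fun, hcardA]
    norm_num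
  have hsplit : T.card + (Finset.univ.filter (fun g : {y : V // y ≠ x} → Option Bool =>
      ¬ ∃ y, g y = some (σ y.1))).card
      = (Finset.univ : Finset ({y : V // y ≠ x} → Option Bool)).card := by
    rw [hT]; exact Finset.card_filter_add_card_filter_not _
  rw [hcompl, htotal] at hsplit
  have hTcard : T.card = 3 ^ (n - 1) - 2 ^ (n - 1) := Nat.eq_sub_of_add_eq hsplit
  exact absurd (le_trans hle (le_of_eq hTcard)) (not_le.mpr hS)
end
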